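/- Every bijective self-isometry T of the metric space W_N (with the metric induced from the Euclidean metric of ℝ^{N−1}) fixes the origin: T(0) = 0. (Note that 0 ∈ W_N, since the polynomial associated to 0 is x^N + 1, all of whose roots lie on the unit circle.) -/

import Mathlib

open Polynomial

/-- The complex coefficient vector associated to `a ∈ ℝ^{N-1}` (paper index `k ∈ {1,…,N-1}`):
`c_k = (a_k + i a_{N-k})/√2` for `k < N/2`, `c_{N/2} = a_{N/2}` (for `N` even), and
`c_k = (a_{N-k} - i a_k)/√2` for `k > N/2`, so that `c_{N-k} = conj (c_k)`. -/
noncomputable def crCoeff (N : ℕ) (a : EuclideanSpace ℝ (Fin (N - 1))) (k : ℕ) : ℂ :=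
  if h : 1 ≤ k ∧ k ≤ N - 1 then
    if 2 * k < N then
      ((a ⟨k - 1, by omega⟩ : ℝ) + Complex.I * (a ⟨N - k - 1, by omega⟩ : ℝ)) / (Real.sqrt 2 : ℝ)
    else if 2 * k = N then ((a ⟨k - 1, by omega⟩ : ℝ) : ℂ)
    else ((a ⟨N - k - 1, by omega⟩ : ℝ) - Complex.I * (a ⟨k - 1, by omega⟩ : ℝ)) / (Real.sqrt 2 : ℝ)
  else 0

/-- The conjugate reciprocal polynomial associated to `a ∈ ℝ^{N-1}`:
`a(x) = (x^N + 1) + ∑_{k=1}^{N-1} c_k x^{N-k}`. -/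
noncomputable def crPoly (N : ℕ) (a : EuclideanSpace ℝ (Fin (N - 1))) : Polynomial ℂ :=
  X ^ N + 1 + ∑ k ∈ Finset.Icc 1 (N - 1), C (crCoeff N a k) * X ^ (N - k)

/-- `W_N`: the set of `a ∈ ℝ^{N-1}` whose associated CR polynomial has all roots on the
unit circle. -/
noncomputable def WSet (N : ℕ) : Set (EuclideanSpace ℝ (Fin (N - 1))) :=
  {a | ∀ z ∈ (crPoly N a).roots, ‖z‖ = 1}

namespace CRAux

open Complex Finset

/-! ### The norm identity `‖a‖² = ∑ |c_k|²` -/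

lemma aux_abs1 (x y : ℝ) :
    ‖((x : ℂ) + Complex.I * (y : ℂ)) / (Real.sqrt 2 : ℝ)‖ ^ 2
      = (x ^ 2 + y ^ 2) / 2 := by
  rw [show (x : ℂ) + Complex.I * (y : ℂ) = (x : ℂ) + (y : ℂ) * Complex.I by ring]
  rw [norm_div, Complex.norm_add_mul_I, Complex.norm_real, Real.norm_eq_abs,
    _root_.abs_of_nonneg (Real.sqrt_nonneg 2), div_pow, Real.sq_sqrt (by positivity),
    Real.sq_sqrt (by norm_num : (0:ℝ) ≤ 2)]

lemma aux_abs2 (x y : ℝ) :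
    ‖((y : ℂ) - Complex.I * (x : ℂ)) / (Real.sqrt 2 : ℝ)‖ ^ 2
      = (x ^ 2 + y ^ 2) / 2 := by
  rw [show (y : ℂ) - Complex.I * (x : ℂ) = ((y : ℂ) + ((-x : ℝ) : ℂ) * Complex.I) by
    push_cast; ring]
  rw [norm_div, Complex.norm_add_mul_I, Complex.norm_real, Real.norm_eq_abs,
    _root_.abs_of_nonneg (Real.sqrt_nonneg 2), div_pow, Real.sq_sqrt (by positivity),
    Real.sq_sqrt (by norm_num : (0:ℝ) ≤ 2)]
  ring

lemma sq_abs_crCoeff (N : ℕ) (a : EuclideanSpace ℝ (Fin (N - 1))) (k : ℕ)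
    (hk : 1 ≤ k ∧ k ≤ N - 1) :
    ‖crCoeff N a k‖ ^ 2
      = ((a ⟨k - 1, by omega⟩ : ℝ) ^ 2 + (a ⟨N - k - 1, by omega⟩ : ℝ) ^ 2) / 2 := by
  rw [crCoeff, dif_pos hk]
  rcases lt_trichotomy (2 * k) N with h | h | h
  · rw [if_pos h, aux_abs1]
  · rw [if_neg (by omega), if_pos h]
    have hfin : (⟨N - k - 1, by omega⟩ : Fin (N - 1)) = ⟨k - 1, by omega⟩ := by
      apply Fin.ext; simp; omega
    rw [hfin, Complex.norm_real, Real.norm_eq_abs, _root_.sq_abs]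
    ring
  · rw [if_neg (by omega), if_neg (by omega), aux_abs2]

lemma norm_sq_eq (N : ℕ) (a : EuclideanSpace ℝ (Fin (N - 1))) :
    ‖a‖ ^ 2 = ∑ k ∈ Finset.Icc 1 (N - 1), ‖crCoeff N a k‖ ^ 2 := by
  classical
  set g : ℕ → ℝ := fun m => if h : m < N - 1 then (a ⟨m, h⟩ : ℝ) ^ 2 else 0 with hg
  have h1 : ∀ k ∈ Finset.Icc 1 (N - 1),
      ‖crCoeff N a k‖ ^ 2 = (g (k - 1) + g (N - k - 1)) / 2 := by
    intro k hk
    rw [Finset.mem_Icc] at hk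
    rw [sq_abs_crCoeff N a k hk]
    simp only [hg]
    rw [dif_pos (by omega : k - 1 < N - 1), dif_pos (by omega : N - k - 1 < N - 1)]
  have h2 : ∑ k ∈ Finset.Icc 1 (N - 1), g (N - k - 1)
      = ∑ k ∈ Finset.Icc 1 (N - 1), g (k - 1) := by
    refine Finset.sum_nbij' (fun k => N - k) (fun k => N - k) ?_ ?_ ?_ ?_ ?_ <;>
        intro k hk <;>
        (try simp only [Finset.mem_Icc, Finset.mem_range] at hk) <;>
        (try simp only [Finset.mem_Icc, Finset.mem_range]) <;>
        first
          | omega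
          | (congr 1; omega)
  have h3 : ∑ k ∈ Finset.Icc 1 (N - 1), g (k - 1) = ∑ m ∈ Finset.range (N - 1), g m := by
    refine Finset.sum_nbij' (fun k => k - 1) (fun m => m + 1) ?_ ?_ ?_ ?_ ?_ <;>
        intro k hk <;>
        (try simp only [Finset.mem_Icc, Finset.mem_range] at hk) <;>
        (try simp only [Finset.mem_Icc, Finset.mem_range]) <;>
        first
          | omega
          | rfl
          | (congr 1; omega)
  have h4 : ∑ m ∈ Finset.range (N - 1), g m = ‖a‖ ^ 2 := by
    rw [← Fin.sum_univ_eq_sum_range g (N - 1)]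
    rw [EuclideanSpace.norm_eq, Real.sq_sqrt (by positivity)]
    apply Finset.sum_congr rfl
    intro i _
    rw [hg]
    simp only [dif_pos i.isLt, Fin.eta, Real.norm_eq_abs, _root_.sq_abs]
  rw [Finset.sum_congr rfl h1, ← Finset.sum_div, Finset.sum_add_distrib, h2, h3, h4]
  ring

/-! ### Coefficient extraction and bound -/

lemma coeff_crPoly (N : ℕ) (a : EuclideanSpace ℝ (Fin (N - 1))) (k : ℕ)
    (hk : 1 ≤ k ∧ k ≤ N - 1) :
    (crPoly N a).coeff (N - k) = crCoeff N a k := by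
  classical
  rw [crPoly, coeff_add, coeff_add, coeff_X_pow, if_neg (by omega), coeff_one,
    if_neg (by omega), finset_sum_coeff]
  rw [Finset.sum_eq_single k]
  · rw [coeff_C_mul, coeff_X_pow, if_pos rfl, mul_one]
    ring
  · intro b hb hbk
    rw [Finset.mem_Icc] at hb
    rw [coeff_C_mul, coeff_X_pow, if_neg (by omega), mul_zero]
  · intro hk'
    exact absurd (Finset.mem_Icc.mpr hk) hk'

lemma crPoly_coeff_top (N : ℕ) (hN : 2 ≤ N) (a : EuclideanSpace ℝ (Fin (N - 1))) :
    (crPoly N a).coeff N = 1 := by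
  classical
  rw [crPoly, coeff_add, coeff_add, coeff_X_pow, if_pos rfl, coeff_one,
    if_neg (by omega), finset_sum_coeff, Finset.sum_eq_zero]
  · ring
  · intro b hb
    rw [Finset.mem_Icc] at hb
    rw [coeff_C_mul, coeff_X_pow, if_neg (by omega), mul_zero]

lemma crPoly_natDegree_le (N : ℕ) (a : EuclideanSpace ℝ (Fin (N - 1))) :
    (crPoly N a).natDegree ≤ N := by
  rw [crPoly]
  apply le_trans (natDegree_add_le _ _)
  apply max_le
  · apply le_trans (natDegree_add_le _ _)
    simp [natDegree_X_pow]
  · apply natDegree_sum_le_of_forall_le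
    intro k _
    apply le_trans (natDegree_C_mul_le _ _)
    rw [natDegree_X_pow]
    omega

lemma crPoly_monic (N : ℕ) (hN : 2 ≤ N) (a : EuclideanSpace ℝ (Fin (N - 1))) :
    (crPoly N a).Monic :=
  monic_of_natDegree_le_of_coeff_eq_one N (crPoly_natDegree_le N a) (crPoly_coeff_top N hN a)

lemma crPoly_natDegree (N : ℕ) (hN : 2 ≤ N) (a : EuclideanSpace ℝ (Fin (N - 1))) :
    (crPoly N a).natDegree = N :=
  le_antisymm (crPoly_natDegree_le N a)
    (le_natDegree_of_ne_zero (by rw [crPoly_coeff_top N hN a]; exact one_ne_zero))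

lemma abs_crCoeff_le (N : ℕ) (hN : 2 ≤ N) (a : EuclideanSpace ℝ (Fin (N - 1)))
    (ha : a ∈ WSet N) (k : ℕ) (hk : 1 ≤ k ∧ k ≤ N - 1) :
    ‖crCoeff N a k‖ ≤ N.choose k := by
  classical
  have ha' : ∀ z ∈ (crPoly N a).roots, ‖z‖ = 1 := ha
  set p := crPoly N a with hp
  have hm : p.Monic := crPoly_monic N hN a
  have hsp : p.Splits := IsAlgClosed.splits p
  have hcard : Multiset.card p.roots = N := by
    rw [splits_iff_card_roots.mp hsp, crPoly_natDegree N hN a]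
  have hfact : p = (p.roots.map fun z => X - C z).prod :=
    hsp.eq_prod_roots_of_monic hm
  have hco : p.coeff (N - k) = (-1 : ℂ) ^ k * p.roots.esymm k := by
    conv_lhs => rw [hfact]
    rw [Multiset.prod_X_sub_C_coeff _ (by rw [hcard]; omega), hcard,
      show N - (N - k) = k from by omega]
  have hesymm : ‖p.roots.esymm k‖ ≤ N.choose k := by
    rw [Multiset.esymm]
    refine le_trans (norm_multiset_sum_le _) ?_
    rw [Multiset.map_map]
    have hrep : (p.roots.powersetCard k).map (fun t => ‖Multiset.prod t‖)
        = Multiset.replicate (N.choose k) 1 := by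
      rw [Multiset.eq_replicate]
      constructor
      · rw [Multiset.card_map, Multiset.card_powersetCard, hcard]
      · intro b hb
        obtain ⟨t, ht, rfl⟩ := Multiset.mem_map.mp hb
        have ht' := (Multiset.mem_powersetCard.mp ht).1
        rw [show ‖t.prod‖ = (t.map (‖·‖)).prod from map_multiset_prod (normHom (α := ℂ)) t]
        apply Multiset.prod_eq_one
        intro x hx
        obtain ⟨z, hz, rfl⟩ := Multiset.mem_map.mp hx
        exact ha' z (Multiset.mem_of_le ht' hz)
    rw [show ((fun t => ‖t‖) ∘ Multiset.prod) = (fun t => ‖Multiset.prod t‖) from rfl, hrep,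
      Multiset.sum_replicate, nsmul_eq_mul, mul_one]
  calc ‖crCoeff N a k‖ = ‖p.coeff (N - k)‖ := by
        rw [coeff_crPoly N a k hk]
    _ = ‖p.roots.esymm k‖ := by
        rw [hco, norm_mul, norm_pow, norm_neg, norm_one, one_pow, one_mul]
    _ ≤ N.choose k := hesymm

lemma norm_sq_le (N : ℕ) (hN : 2 ≤ N) (a : EuclideanSpace ℝ (Fin (N - 1)))
    (ha : a ∈ WSet N) :
    ‖a‖ ^ 2 ≤ ∑ k ∈ Finset.Icc 1 (N - 1), ((N.choose k : ℝ)) ^ 2 := by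
  rw [norm_sq_eq]
  apply Finset.sum_le_sum
  intro k hk
  have h1 := abs_crCoeff_le N hN a ha k (Finset.mem_Icc.mp hk)
  have h2 : 0 ≤ ‖crCoeff N a k‖ := norm_nonneg _
  nlinarith

/-! ### The vertices -/

noncomputable def om (N : ℕ) : ℂ := Complex.exp (2 * Real.pi * Complex.I / N)

lemma om_prim (N : ℕ) (hN : 2 ≤ N) : IsPrimitiveRoot (om N) N :=
  Complex.isPrimitiveRoot_exp N (by omega)

lemma om_pow_N (N : ℕ) (hN : 2 ≤ N) : om N ^ N = 1 := (om_prim N hN).pow_eq_one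

lemma abs_om (N : ℕ) (hN : 2 ≤ N) : ‖om N‖ = 1 := by
  rw [om, show 2 * (Real.pi : ℂ) * Complex.I / (N : ℂ)
      = ((2 * Real.pi / N : ℝ) : ℂ) * Complex.I by push_cast; ring]
  exact Complex.norm_exp_ofReal_mul_I _

lemma conj_om_pow (N : ℕ) (hN : 2 ≤ N) (m n j : ℕ) (h : m + n = N * j) :
    (starRingEnd ℂ) (om N ^ m) = om N ^ n := by
  have h1 : om N ^ m * om N ^ n = 1 := by
    rw [← pow_add, h, pow_mul, om_pow_N N hN, one_pow]
  have h2 : ‖om N ^ m‖ = 1 := by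
    rw [norm_pow, abs_om N hN, one_pow]
  rw [← Complex.inv_eq_conj h2]
  exact inv_eq_of_mul_eq_one_right h1

noncomputable def vert (N j : ℕ) : EuclideanSpace ℝ (Fin (N - 1)) := WithLp.toLp 2 fun i =>
  if 2 * ((i : ℕ) + 1) < N then
    Real.sqrt 2 * (N.choose ((i : ℕ) + 1)) * (om N ^ (j * ((i : ℕ) + 1))).re
  else if 2 * ((i : ℕ) + 1) = N then
    (N.choose ((i : ℕ) + 1)) * (om N ^ (j * ((i : ℕ) + 1))).re
  else
    Real.sqrt 2 * (N.choose (N - ((i : ℕ) + 1))) * (om N ^ (j * (N - ((i : ℕ) + 1)))).im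

lemma crCoeff_vert (N : ℕ) (hN : 2 ≤ N) (j k : ℕ) (hk : 1 ≤ k ∧ k ≤ N - 1) :
    crCoeff N (vert N j) k = (N.choose k : ℂ) * om N ^ (j * k) := by
  have hs2 : ((Real.sqrt 2 : ℝ) : ℂ) ≠ 0 := by
    simp only [ne_eq, Complex.ofReal_eq_zero]
    positivity
  rw [crCoeff, dif_pos hk]
  rcases lt_trichotomy (2 * k) N with h | h | h
  · rw [if_pos h]
    have e1 : vert N j ⟨k - 1, by omega⟩
        = Real.sqrt 2 * (N.choose k) * (om N ^ (j * k)).re := by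
      simp only [vert, PiLp.toLp_apply]
      rw [show k - 1 + 1 = k from by omega, if_pos h]
    have e2 : vert N j ⟨N - k - 1, by omega⟩
        = Real.sqrt 2 * (N.choose k) * (om N ^ (j * k)).im := by
      simp only [vert, PiLp.toLp_apply]
      rw [show N - k - 1 + 1 = N - k from by omega, if_neg (by omega), if_neg (by omega),
        show N - (N - k) = k from by omega]
    obtain ⟨x, y, hz⟩ : ∃ x y : ℝ, om N ^ (j * k) = (x : ℂ) + (y : ℂ) * Complex.I :=
      ⟨_, _, (Complex.re_add_im _).symm⟩
    have hx : (om N ^ (j * k)).re = x := by rw [hz]; simp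
    have hy : (om N ^ (j * k)).im = y := by rw [hz]; simp
    rw [e1, e2, hx, hy, hz]
    push_cast
    field_simp
  · rw [if_neg (by omega), if_pos h]
    have e1 : vert N j ⟨k - 1, by omega⟩ = (N.choose k) * (om N ^ (j * k)).re := by
      simp only [vert, PiLp.toLp_apply]
      rw [show k - 1 + 1 = k from by omega, if_neg (by omega), if_pos h]
    rw [e1]
    have hsq : om N ^ k * om N ^ k = 1 := by
      rw [← pow_add, show k + k = N from by omega, om_pow_N N hN]
    have hjk : om N ^ (j * k) = (om N ^ k) ^ j := by
      rw [mul_comm j k, pow_mul]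
    rcases mul_self_eq_one_iff.mp hsq with h1 | h1
    · rw [hjk, h1, one_pow]
      simp
    · rw [hjk, h1]
      rcases Nat.even_or_odd j with hj | hj
      · rw [hj.neg_one_pow]
        simp
      · rw [hj.neg_one_pow]
        simp
  · rw [if_neg (by omega), if_neg (by omega)]
    have e1 : vert N j ⟨N - k - 1, by omega⟩
        = Real.sqrt 2 * (N.choose (N - k)) * (om N ^ (j * (N - k))).re := by
      simp only [vert, PiLp.toLp_apply]
      rw [show N - k - 1 + 1 = N - k from by omega, if_pos (by omega)]
    have e2 : vert N j ⟨k - 1, by omega⟩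
        = Real.sqrt 2 * (N.choose (N - k)) * (om N ^ (j * (N - k))).im := by
      simp only [vert, PiLp.toLp_apply]
      rw [show k - 1 + 1 = k from by omega, if_neg (by omega), if_neg (by omega)]
    have hCC : N.choose (N - k) = N.choose k := Nat.choose_symm (by omega)
    have hc : (starRingEnd ℂ) (om N ^ (j * (N - k))) = om N ^ (j * k) :=
      conj_om_pow N hN _ _ j (by rw [← Nat.mul_add, Nat.sub_add_cancel (by omega), mul_comm])
    obtain ⟨x, y, hz⟩ : ∃ x y : ℝ, om N ^ (j * (N - k)) = (x : ℂ) + (y : ℂ) * Complex.I :=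
      ⟨_, _, (Complex.re_add_im _).symm⟩
    have hx : (om N ^ (j * (N - k))).re = x := by rw [hz]; simp
    have hy : (om N ^ (j * (N - k))).im = y := by rw [hz]; simp
    rw [e1, e2, hCC, hx, hy, ← hc, hz]
    rw [map_add, map_mul, Complex.conj_ofReal, Complex.conj_ofReal, Complex.conj_I]
    push_cast
    field_simp
    ring

lemma crPoly_vert (N : ℕ) (hN : 2 ≤ N) (j : ℕ) :
    crPoly N (vert N j) = (X + C (om N ^ j)) ^ N := by
  classical
  have hzN : (om N ^ j) ^ N = 1 := by
    rw [← pow_mul, mul_comm, pow_mul, om_pow_N N hN, one_pow]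
  rw [add_pow]
  have key : ∀ k ∈ Finset.range (N + 1),
      X ^ (N + 1 - 1 - k) * (C (om N ^ j)) ^ (N - (N + 1 - 1 - k))
          * ((N.choose (N + 1 - 1 - k) : Polynomial ℂ))
        = C ((N.choose k : ℂ) * om N ^ (j * k)) * X ^ (N - k) := by
    intro k hk
    have hkN : k ≤ N := by
      rw [Finset.mem_range] at hk; omega
    rw [show N + 1 - 1 - k = N - k from by omega, show N - (N - k) = k from by omega,
      Nat.choose_symm hkN, pow_mul, C_mul, C_pow, ← C_eq_natCast]
    simp only [map_pow]
    ring
  rw [← Finset.sum_range_reflect, Finset.sum_congr rfl key]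
  have hsplit : Finset.range (N + 1) = insert 0 (insert N (Finset.Icc 1 (N - 1))) := by
    ext m
    simp only [Finset.mem_range, Finset.mem_insert, Finset.mem_Icc]
    omega
  rw [hsplit, Finset.sum_insert (by simp only [Finset.mem_insert, Finset.mem_Icc]; omega),
    Finset.sum_insert (by simp only [Finset.mem_Icc]; omega)]
  have ht0 : C ((N.choose 0 : ℂ) * om N ^ (j * 0)) * X ^ (N - 0) = X ^ N := by
    simp
  have htN : C ((N.choose N : ℂ) * om N ^ (j * N)) * X ^ (N - N) = 1 := by
    rw [mul_comm j N, pow_mul, om_pow_N N hN, one_pow]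
    simp
  rw [ht0, htN, crPoly]
  have hmid : ∑ k ∈ Finset.Icc 1 (N - 1), C (crCoeff N (vert N j) k) * X ^ (N - k)
      = ∑ k ∈ Finset.Icc 1 (N - 1), C ((N.choose k : ℂ) * om N ^ (j * k)) * X ^ (N - k) := by
    apply Finset.sum_congr rfl
    intro k hk
    rw [crCoeff_vert N hN j k (Finset.mem_Icc.mp hk)]
  rw [hmid]
  ring

lemma vert_mem (N : ℕ) (hN : 2 ≤ N) (j : ℕ) : vert N j ∈ WSet N := by
  intro z hz
  rw [crPoly_vert N hN j, roots_pow] at hz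
  have hz' := Multiset.mem_of_mem_nsmul hz
  rw [show X + C (om N ^ j) = X - C (-(om N ^ j)) by rw [map_neg, sub_neg_eq_add],
    roots_X_sub_C, Multiset.mem_singleton] at hz'
  rw [hz', norm_neg, norm_pow, abs_om N hN, one_pow]

lemma norm_vert_sq (N : ℕ) (hN : 2 ≤ N) (j : ℕ) :
    ‖vert N j‖ ^ 2 = ∑ k ∈ Finset.Icc 1 (N - 1), ((N.choose k : ℝ)) ^ 2 := by
  rw [norm_sq_eq]
  apply Finset.sum_congr rfl
  intro k hk
  rw [crCoeff_vert N hN j k (Finset.mem_Icc.mp hk), norm_mul, norm_pow, abs_om N hN,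
    one_pow, mul_one, Complex.norm_natCast]

lemma sum_om_pow (N : ℕ) (hN : 2 ≤ N) (m : ℕ) (h1 : 1 ≤ m) (h2 : m ≤ N - 1) :
    ∑ j ∈ Finset.range N, om N ^ (j * m) = 0 := by
  have hne : om N ^ m ≠ 1 :=
    (om_prim N hN).pow_ne_one_of_pos_of_lt (by omega) (by omega)
  have hstep : ∑ j ∈ Finset.range N, om N ^ (j * m)
      = ∑ j ∈ Finset.range N, (om N ^ m) ^ j := by
    apply Finset.sum_congr rfl
    intro j _
    rw [mul_comm j m, pow_mul]
  rw [hstep, geom_sum_eq hne, ← pow_mul, mul_comm m N, pow_mul, om_pow_N N hN, one_pow,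
    sub_self, zero_div]

lemma sum_vert_comp (N : ℕ) (hN : 2 ≤ N) (i : Fin (N - 1)) :
    ∑ j ∈ Finset.range N, vert N j i = 0 := by
  have hi := i.isLt
  simp only [vert, PiLp.toLp_apply]
  split_ifs with h1 h2
  · rw [← Finset.mul_sum, ← Complex.re_sum, sum_om_pow N hN _ (by omega) (by omega)]
    simp
  · rw [← Finset.mul_sum, ← Complex.re_sum, sum_om_pow N hN _ (by omega) (by omega)]
    simp
  · rw [← Finset.mul_sum, ← Complex.im_sum, sum_om_pow N hN _ (by omega) (by omega)]
    simp

end CRAux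

open CRAux RealInnerProductSpace in
/-- Every bijective self-isometry of the metric space `W_N` fixes the origin (which lies in
`W_N`, its associated polynomial being `x^N + 1`). -/
theorem WSet_isometry_fixes_origin (N : ℕ) (hN : 2 ≤ N)
    (h0 : (0 : EuclideanSpace ℝ (Fin (N - 1))) ∈ WSet N)
    (T : WSet N ≃ᵢ WSet N) :
    (T ⟨0, h0⟩ : EuclideanSpace ℝ (Fin (N - 1))) = 0 := by
  classical
  by_contra hx
  set x : EuclideanSpace ℝ (Fin (N - 1)) := (T ⟨0, h0⟩ : EuclideanSpace ℝ (Fin (N - 1)))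
    with hxdef
  set M : ℝ := ∑ k ∈ Finset.Icc 1 (N - 1), ((N.choose k : ℝ)) ^ 2 with hM
  have hinner_eq : ∀ j : ℕ, (inner ℝ x (vert N j) : ℝ) = ∑ i : Fin (N - 1), x i * vert N j i := by
    intro j
    rw [PiLp.inner_apply]
    simp [RCLike.inner_apply, conj_trivial, mul_comm]
  obtain ⟨j, hj, hneg⟩ : ∃ j ∈ Finset.range N, (inner ℝ x (vert N j) : ℝ) ≤ 0 := by
    by_contra hcon
    push_neg at hcon
    have hsum : ∑ j ∈ Finset.range N, (inner ℝ x (vert N j) : ℝ) = 0 := by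
      rw [Finset.sum_congr rfl fun j _ => hinner_eq j, Finset.sum_comm]
      apply Finset.sum_eq_zero
      intro i _
      rw [← Finset.mul_sum, sum_vert_comp N hN i, mul_zero]
    have hpos : 0 < ∑ j ∈ Finset.range N, (inner ℝ x (vert N j) : ℝ) :=
      Finset.sum_pos hcon ⟨0, Finset.mem_range.mpr (by omega)⟩
    linarith
  set v : EuclideanSpace ℝ (Fin (N - 1)) := vert N j with hv
  obtain ⟨y, hy⟩ := T.surjective ⟨v, vert_mem N hN j⟩
  have hdist : ‖x - v‖ = ‖(y : EuclideanSpace ℝ (Fin (N - 1)))‖ := by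
    have h1 : dist (T ⟨0, h0⟩) (T y) = dist (⟨0, h0⟩ : WSet N) y := T.isometry.dist_eq _ _
    rw [hy, Subtype.dist_eq, Subtype.dist_eq] at h1
    rw [dist_eq_norm, dist_eq_norm] at h1
    simpa using h1
  have hyle : ‖(y : EuclideanSpace ℝ (Fin (N - 1)))‖ ^ 2 ≤ M := norm_sq_le N hN _ y.2
  have hvM : ‖v‖ ^ 2 = M := norm_vert_sq N hN j
  have hexp : ‖x - v‖ ^ 2 = ‖x‖ ^ 2 - 2 * (inner ℝ x v : ℝ) + ‖v‖ ^ 2 := norm_sub_sq_real x v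
  have hxpos : 0 < ‖x‖ ^ 2 := pow_pos (norm_pos_iff.mpr hx) 2
  have hsq : ‖x - v‖ ^ 2 = ‖(y : EuclideanSpace ℝ (Fin (N - 1)))‖ ^ 2 := by rw [hdist]
  linarith
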